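/- arXiv:1412.1533 — 3 statements merged into one kernel-verified Lean document; each statement's English description precedes it below -/
import Mathlib

section
/- Let R be a commutative Noetherian ring and M a nonzero finitely generated R-module with projdim_R(M) < ∞. Then projdim_R(M) = sup { i : Ext_R^i(M, R) ≠ 0 }, the supremum taken in ℕ ∪ {∞}. -/
open CategoryTheory

/-- `M` admits a projective resolution of length at most `n`. -/
def HasProjResLengthLE (R : Type) [Ring R] (M : Type) [AddCommGroup M] [Module R M]
    (n : ℕ) : Prop :=
  ∃ P : ProjectiveResolution (ModuleCat.of R M), ∀ i, n < i → Limits.IsZero (P.complex.X i)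

/-- The projective dimension of `M`, as the infimum in `ℕ∞` of the lengths of
projective resolutions of `M`. -/
noncomputable def projDim (R : Type) [Ring R] (M : Type) [AddCommGroup M] [Module R M] : ℕ∞ :=
  ⨅ (n : ℕ) (_ : HasProjResLengthLE R M n), (n : ℕ∞)

/-- The `n`-th Ext group `Ext_R^n(M, N)`. -/
noncomputable abbrev extGroup (R : Type) [CommRing R] (M N : Type) [AddCommGroup M] [Module R M]
    [AddCommGroup N] [Module R N] (n : ℕ) : Type _ :=
  ((Ext R (ModuleCat R) n).obj (Opposite.op (ModuleCat.of R M))).obj (ModuleCat.of R N)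

/-!
Let `d` be the least length of a projective resolution of `M`. Computing `Ext` on such a
resolution shows `Ext^i(M, -) = 0` for `i > d`. For `Ext^d(M, R) ≠ 0`, use instead a free
resolution `F` whose syzygies `K_n` are finitely generated (`R` is Noetherian) and read `Ext` off
its cocycles. Vanishing of `Ext^{d+1}(M, K_{d+1})` lets the cover `F_{d+1} → K_{d+1}` extend over
`F_d`, splitting `K_{d+1} ↪ F_d`; so `K_d` is projective, hence a retract of a finite free `R^r`.
If `Ext^d(M, R)` vanished, every map `K_d → R`, hence every map `K_d → R^r`, would extend along
`K_d ↪ F_{d-1}`; extending the section `K_d → R^r` and composing with the cover splits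
`K_d ↪ F_{d-1}`, so `K_{d-1}` is projective and `M` has a resolution of length `d - 1`. When
`d = 0` the same argument shows that `M`, a retract of `R^r` with `Hom(M, R) = 0`, vanishes.
-/

open Limits

universe v u

namespace CategoryTheory.ProjectiveResolution

variable {C : Type u} [Category.{v} C] [Abelian C]

noncomputable def ofExact {Z : C} (X : ChainComplex C ℕ) [∀ n, Projective (X.X n)]
    (π : X.X 0 ⟶ Z) (w : X.d 1 0 ≫ π = 0) [hπ : Epi π]
    (exact₀ : (ShortComplex.mk _ _ w).Exact) (exact : ∀ n, X.ExactAt (n + 1)) :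
    ProjectiveResolution Z where
  complex := X
  π := (ChainComplex.toSingle₀Equiv _ _).symm ⟨π, w⟩
  quasiIso := ⟨fun n => by
    cases n with
    | zero =>
      rw [ChainComplex.quasiIsoAt₀_iff,
        ShortComplex.quasiIso_iff_of_zeros' _ (X.shape _ _ (by simp)) rfl rfl]
      refine (ShortComplex.exact_and_epi_g_iff_of_iso ?_).2 ⟨exact₀, hπ⟩
      refine ShortComplex.isoMk (Iso.refl _) (Iso.refl _) (Iso.refl _) ?_ ?_
      · exact (Category.id_comp _).trans (Category.comp_id _).symm
      · simp only [Iso.refl_hom, HomologicalComplex.shortComplexFunctor'_map_τ₂,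
          ChainComplex.toSingle₀Equiv_symm_apply_f_zero]
        exact (Category.id_comp _).trans (Category.comp_id _).symm
    | succ n =>
      rw [quasiIsoAt_iff_exactAt' _ _ (ChainComplex.exactAt_succ_single_obj _ _)]
      exact exact n⟩

variable {S : ShortComplex C} (P : ProjectiveResolution S.X₁)

/-- `P.π.f 0`, whose target `((single₀ C).obj S.X₁).X 0` is only definitionally `S.X₁`. -/
noncomputable def π₀ : P.complex.X 0 ⟶ S.X₁ :=
  P.π.f 0 ≫ (HomologicalComplex.singleObjXSelf (ComplexShape.down ℕ) 0 S.X₁).hom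

instance : Epi P.π₀ := by unfold π₀; infer_instance

lemma complex_d_comp_π₀ : P.complex.d 1 0 ≫ P.π₀ = 0 := by
  rw [π₀, ← Category.assoc, P.complex_d_comp_π_f_zero, zero_comp]

lemma exact_π₀ : (ShortComplex.mk _ _ P.complex_d_comp_π₀).Exact :=
  (ShortComplex.exact_iff_of_epi_of_isIso_of_mono
    (S₁ := ShortComplex.mk _ _ P.complex_d_comp_π_f_zero)
    (S₂ := ShortComplex.mk _ _ P.complex_d_comp_π₀)
    { τ₁ := 𝟙 _, τ₂ := 𝟙 _, τ₃ := (HomologicalComplex.singleObjXSelf _ 0 S.X₁).hom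
      comm₂₃ := Category.id_comp _ }).1 P.exact₀

lemma complex_d_comp_π₀_comp_f : P.complex.d 1 0 ≫ P.π₀ ≫ S.f = 0 := by
  rw [← Category.assoc, P.complex_d_comp_π₀, zero_comp]

/-- The complex `⋯ → P₁ → P₀ → S.X₂`. -/
noncomputable def splice : ChainComplex C ℕ :=
  P.complex.augment (P.π₀ ≫ S.f) P.complex_d_comp_π₀_comp_f

instance [Projective S.X₂] (n : ℕ) : Projective (P.splice.X n) := by
  cases n
  · exact (inferInstance : Projective S.X₂)
  · exact P.projective _

lemma splice_d_comp_g : P.splice.d 1 0 ≫ S.g = 0 := by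
  change (P.π₀ ≫ S.f) ≫ S.g = 0
  rw [Category.assoc, S.zero, comp_zero]

lemma exact_splice_d_g (hS : S.Exact) : (ShortComplex.mk _ _ P.splice_d_comp_g).Exact := by
  let φ : ShortComplex.mk _ _ P.splice_d_comp_g ⟶ S :=
    { τ₁ := P.π₀, τ₂ := 𝟙 _, τ₃ := 𝟙 _, comm₁₂ := (Category.comp_id _).symm
      comm₂₃ := (Category.id_comp _).trans (Category.comp_id _).symm }
  have : Epi φ.τ₁ := (inferInstance : Epi P.π₀)
  have : IsIso φ.τ₂ := (inferInstance : IsIso (𝟙 _))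
  exact (ShortComplex.exact_iff_of_epi_of_isIso_of_mono φ).2 hS

lemma splice_exactAt_succ [Mono S.f] (n : ℕ) : P.splice.ExactAt (n + 1) := by
  cases n with
  | zero =>
    rw [HomologicalComplex.exactAt_iff' _ 2 1 0 (by simp) (by simp)]
    let φ : ShortComplex.mk _ _ P.complex_d_comp_π₀ ⟶ P.splice.sc' 2 1 0 :=
      { τ₁ := 𝟙 _, τ₂ := 𝟙 _, τ₃ := S.f
        comm₁₂ := (Category.id_comp _).trans (Category.comp_id _).symm
        comm₂₃ := Category.id_comp _ }
    have : Epi φ.τ₁ := (inferInstance : Epi (𝟙 _))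
    have : IsIso φ.τ₂ := (inferInstance : IsIso (𝟙 _))
    have : Mono φ.τ₃ := (inferInstance : Mono S.f)
    exact (ShortComplex.exact_iff_of_epi_of_isIso_of_mono φ).1 P.exact_π₀
  | succ n =>
    have := P.complex_exactAt_succ n
    rw [HomologicalComplex.exactAt_iff' _ (n + 2) (n + 1) n (by simp) (by simp)] at this
    rwa [HomologicalComplex.exactAt_iff' _ (n + 3) (n + 2) (n + 1) (by simp) (by simp)]

noncomputable def ofShortExact [Projective S.X₂] (hS : S.ShortExact) : ProjectiveResolution S.X₃ :=
  haveI := hS.mono_f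
  ofExact (hπ := hS.epi_g) P.splice S.g P.splice_d_comp_g (P.exact_splice_d_g hS.exact)
    P.splice_exactAt_succ

end CategoryTheory.ProjectiveResolution
namespace CategoryTheory.ProjectiveResolution

variable {R : Type*} [Ring R] {C : Type u} [Category.{v} C] [Abelian C] [Linear R C]
  [EnoughProjectives C] {Z : C} (P : ProjectiveResolution Z) (Y : C)

lemma isZero_ext_of_isZero_X {n : ℕ} (h : IsZero (P.complex.X n)) :
    IsZero (((Ext R C n).obj (Opposite.op Z)).obj Y) := by
  refine IsZero.of_iso ?_ (P.isoExt n Y)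
  rw [← HomologicalComplex.exactAt_iff_isZero_homology, HomologicalComplex.exactAt_iff]
  refine ShortComplex.exact_of_isZero_X₂ _ ?_
  rw [IsZero.iff_id_eq_zero]
  ext (x : _ ⟶ _)
  exact h.eq_of_src x 0

lemma exactAt_linearYonedaObj_of_isZero_ext {n : ℕ}
    (h : IsZero (((Ext R C n).obj (Opposite.op Z)).obj Y)) :
    (P.complex.linearYonedaObj R Y).ExactAt n := by
  rw [HomologicalComplex.exactAt_iff_isZero_homology]
  exact h.of_iso (P.isoExt n Y).symm

lemma exists_d_comp_eq_of_isZero_ext {n : ℕ}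
    (h : IsZero (((Ext R C (n + 1)).obj (Opposite.op Z)).obj Y))
    (f : P.complex.X (n + 1) ⟶ Y) (hf : P.complex.d (n + 2) (n + 1) ≫ f = 0) :
    ∃ g : P.complex.X n ⟶ Y, P.complex.d (n + 1) n ≫ g = f := by
  have := P.exactAt_linearYonedaObj_of_isZero_ext Y h
  rw [HomologicalComplex.exactAt_iff' _ n (n + 1) (n + 2) (by simp) (by simp),
    ShortComplex.moduleCat_exact_iff] at this
  exact this f hf

lemma eq_zero_of_isZero_ext_zero (h : IsZero (((Ext R C 0).obj (Opposite.op Z)).obj Y))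
    (f : P.complex.X 0 ⟶ Y) (hf : P.complex.d 1 0 ≫ f = 0) : f = 0 := by
  have := P.exactAt_linearYonedaObj_of_isZero_ext Y h
  rw [HomologicalComplex.exactAt_iff' _ 0 0 1 (by simp) (by simp),
    ShortComplex.moduleCat_exact_iff] at this
  obtain ⟨g, hg⟩ := this f hf
  change (P.complex.linearYonedaObj R Y).d 0 0 g = f at hg
  rw [HomologicalComplex.shape _ 0 0 (by simp)] at hg
  exact hg.symm

end CategoryTheory.ProjectiveResolution

namespace LinearMap

variable {R : Type*} [Ring R] {K F ι : Type*} [AddCommGroup K] [Module R K]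
  [AddCommGroup F] [Module R F] {i : K →ₗ[R] F} {p : (ι → R) →ₗ[R] K} {s : K →ₗ[R] ι → R}

lemma exists_retraction_of_forall_exists_comp_eq (hps : p ∘ₗ s = id)
    (h : ∀ φ : K →ₗ[R] R, ∃ ψ : F →ₗ[R] R, ψ ∘ₗ i = φ) : ∃ ρ : F →ₗ[R] K, ρ ∘ₗ i = id := by
  choose ψ hψ using fun j => h (proj j ∘ₗ s)
  have hs : pi ψ ∘ₗ i = s := LinearMap.ext fun x => funext fun j => LinearMap.congr_fun (hψ j) x
  exact ⟨p ∘ₗ pi ψ, by rw [comp_assoc, hs, hps]⟩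

lemma subsingleton_of_forall_eq_zero (hps : p ∘ₗ s = id) (h : ∀ φ : K →ₗ[R] R, φ = 0) :
    Subsingleton K := by
  have hs : s = 0 := LinearMap.ext fun x => funext fun j => LinearMap.congr_fun (h (proj j ∘ₗ s)) x
  refine ⟨fun x y => ?_⟩
  rw [← LinearMap.id_apply (R := R) x, ← LinearMap.id_apply (R := R) y, ← hps, hs]
  simp

end LinearMap

namespace FGModuleCat

variable {R : Type u} [Ring R]

noncomputable def numGens (A : FGModuleCat.{u} R) : ℕ :=
  (Module.Finite.exists_fin' R A).choose

noncomputable def cover (A : FGModuleCat.{u} R) : (Fin A.numGens → R) →ₗ[R] A :=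
  (Module.Finite.exists_fin' R A).choose_spec.choose

lemma cover_surjective (A : FGModuleCat.{u} R) : Function.Surjective A.cover :=
  (Module.Finite.exists_fin' R A).choose_spec.choose_spec

lemma shortExact_cover (A : FGModuleCat.{u} R) : A.cover.shortComplexKer.ShortExact :=
  LinearMap.shortExact_shortComplexKer A.cover_surjective

variable [IsNoetherianRing R]

noncomputable def syzygy (A : FGModuleCat.{u} R) : FGModuleCat.{u} R :=
  of R (LinearMap.ker A.cover)

noncomputable def iterSyzygy (A : FGModuleCat.{u} R) : ℕ → FGModuleCat.{u} R
  | 0 => A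
  | n + 1 => (A.iterSyzygy n).syzygy

lemma iterSyzygy_succ' (A : FGModuleCat.{u} R) (n : ℕ) :
    A.iterSyzygy (n + 1) = A.syzygy.iterSyzygy n := by
  induction n with
  | zero => rfl
  | succ n ih => exact congrArg syzygy ih

lemma exists_projectiveResolution_of_projective_iterSyzygy (n : ℕ) (A : FGModuleCat.{u} R)
    (h : Projective (A.iterSyzygy n).obj) :
    ∃ P : ProjectiveResolution A.obj, ∀ i, n < i → IsZero (P.complex.X i) := by
  induction n generalizing A with
  | zero =>
    have : Projective A.obj := h
    exact ⟨ProjectiveResolution.self A.obj, fun i hi =>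
      HomologicalComplex.isZero_single_obj_X _ 0 _ i (by omega)⟩
  | succ n ih =>
    rw [iterSyzygy_succ'] at h
    obtain ⟨P, hP⟩ := ih A.syzygy h
    refine ⟨P.ofShortExact A.shortExact_cover, ?_⟩
    rintro (_ | i) hi
    · omega
    · exact hP i (by omega)

lemma exact_syzygy_cover (A : FGModuleCat.{u} R) :
    Function.Exact ((LinearMap.ker A.cover).subtype ∘ₗ A.syzygy.cover) A.cover :=
  A.syzygy.cover_surjective.comp_exact_iff_exact.2
    (LinearMap.exact_subtype_ker_map _)

lemma projective_of_retraction (A : FGModuleCat.{u} R)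
    {ρ : (Fin A.numGens → R) →ₗ[R] A.syzygy} (hρ : ρ ∘ₗ (LinearMap.ker A.cover).subtype = .id) :
    Module.Projective R A := by
  obtain ⟨σ, hσ⟩ := (((LinearMap.exact_subtype_ker_map A.cover).split_tfae
    (LinearMap.ker A.cover).injective_subtype A.cover_surjective).out 1 0).1
    (⟨ρ, hρ⟩ : ∃ l, l ∘ₗ _ = LinearMap.id)
  exact Module.Projective.of_split σ A.cover hσ

/-- The free resolution `⋯ → R^{r₁} → R^{r₀}` of `A` whose `n`-th syzygy is `A.iterSyzygy n`. -/
noncomputable def freeComplex (A : FGModuleCat.{u} R) : ChainComplex (ModuleCat.{u} R) ℕ :=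
  ChainComplex.of (fun n => ModuleCat.of R (Fin (A.iterSyzygy n).numGens → R))
    (fun n => ModuleCat.ofHom
      ((LinearMap.ker (A.iterSyzygy n).cover).subtype ∘ₗ (A.iterSyzygy (n + 1)).cover))
    (fun n => ModuleCat.hom_ext <| LinearMap.ext fun x =>
      congrArg Subtype.val ((A.iterSyzygy (n + 2)).cover x).2)

lemma freeComplex_d (A : FGModuleCat.{u} R) (n : ℕ) :
    A.freeComplex.d (n + 1) n = ModuleCat.ofHom
      ((LinearMap.ker (A.iterSyzygy n).cover).subtype ∘ₗ (A.iterSyzygy (n + 1)).cover) := by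
  simp [freeComplex]

instance (A : FGModuleCat.{u} R) (n : ℕ) : Projective (A.freeComplex.X n) :=
  inferInstanceAs (Projective (ModuleCat.of R (Fin (A.iterSyzygy n).numGens → R)))

lemma freeComplex_d_comp_cover (A : FGModuleCat.{u} R) (n : ℕ) :
    A.freeComplex.d (n + 1) n ≫ ModuleCat.ofHom (A.iterSyzygy n).cover = 0 := by
  rw [freeComplex_d]
  exact ModuleCat.hom_ext <| LinearMap.ext fun x => ((A.iterSyzygy (n + 1)).cover x).2

lemma freeComplex_d_comp_cover_comp (A : FGModuleCat.{u} R) (n : ℕ) {N : ModuleCat.{u} R}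
    (φ : A.iterSyzygy n →ₗ[R] N) :
    A.freeComplex.d (n + 1) n ≫ ModuleCat.ofHom (φ ∘ₗ (A.iterSyzygy n).cover) = 0 := by
  change (A.freeComplex.d (n + 1) n ≫ ModuleCat.ofHom (A.iterSyzygy n).cover) ≫
    ModuleCat.ofHom φ = 0
  rw [A.freeComplex_d_comp_cover, zero_comp]

lemma freeComplex_exactAt_succ (A : FGModuleCat.{u} R) (n : ℕ) : A.freeComplex.ExactAt (n + 1) := by
  rw [HomologicalComplex.exactAt_iff' _ (n + 2) (n + 1) n (by simp) (by simp)]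
  apply ModuleCat.shortComplex_exact
  change Function.Exact (A.freeComplex.d (n + 2) (n + 1)) (A.freeComplex.d (n + 1) n)
  rw [freeComplex_d, freeComplex_d]
  exact (LinearMap.ker (A.iterSyzygy n).cover).injective_subtype.comp_exact_iff_exact.2
    (A.iterSyzygy (n + 1)).exact_syzygy_cover

noncomputable def freeResolution (A : FGModuleCat.{u} R) : ProjectiveResolution A.obj :=
  .ofExact (hπ := (ModuleCat.epi_iff_surjective _).2 A.cover_surjective) A.freeComplex
    (ModuleCat.ofHom A.cover) (A.freeComplex_d_comp_cover 0)
    (by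
      apply ModuleCat.shortComplex_exact
      change Function.Exact (A.freeComplex.d 1 0) A.cover
      rw [freeComplex_d]
      exact A.exact_syzygy_cover)
    A.freeComplex_exactAt_succ

end FGModuleCat

namespace FGModuleCat

variable {R : Type u} [CommRing R] [IsNoetherianRing R] (A : FGModuleCat.{u} R)

lemma exists_comp_subtype_eq_of_isZero_ext (n : ℕ) {N : ModuleCat.{u} R}
    (h : IsZero (((Ext R (ModuleCat.{u} R) (n + 1)).obj (Opposite.op A.obj)).obj N))
    (φ : A.iterSyzygy (n + 1) →ₗ[R] N) :
    ∃ ψ : (Fin (A.iterSyzygy n).numGens → R) →ₗ[R] N,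
      ψ ∘ₗ (LinearMap.ker (A.iterSyzygy n).cover).subtype = φ := by
  obtain ⟨g, hg⟩ := A.freeResolution.exists_d_comp_eq_of_isZero_ext N h
    (ModuleCat.ofHom (φ ∘ₗ (A.iterSyzygy (n + 1)).cover))
    (A.freeComplex_d_comp_cover_comp (n + 1) φ)
  refine ⟨g.hom, (LinearMap.cancel_right (A.iterSyzygy (n + 1)).cover_surjective).1 ?_⟩
  change A.freeComplex.d (n + 1) n ≫ g = _ at hg
  rw [freeComplex_d] at hg
  exact congrArg ModuleCat.Hom.hom hg

lemma projective_iterSyzygy_of_isZero_ext (n : ℕ)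
    (h : IsZero (((Ext R (ModuleCat.{u} R) (n + 1)).obj (Opposite.op A.obj)).obj
      (A.iterSyzygy (n + 1)).obj)) :
    Module.Projective R (A.iterSyzygy n) := by
  obtain ⟨ρ, hρ⟩ := A.exists_comp_subtype_eq_of_isZero_ext n h .id
  exact (A.iterSyzygy n).projective_of_retraction hρ

lemma projective_iterSyzygy_of_isZero_ext_self (n : ℕ)
    (h : IsZero (((Ext R (ModuleCat.{u} R) (n + 1)).obj (Opposite.op A.obj)).obj
      (ModuleCat.of R R)))
    [Module.Projective R (A.iterSyzygy (n + 1))] :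
    Module.Projective R (A.iterSyzygy n) := by
  obtain ⟨σ, hσ⟩ := Module.projective_lifting_property (A.iterSyzygy (n + 1)).cover .id
    (A.iterSyzygy (n + 1)).cover_surjective
  obtain ⟨ρ, hρ⟩ := LinearMap.exists_retraction_of_forall_exists_comp_eq hσ
    (A.exists_comp_subtype_eq_of_isZero_ext n h)
  exact (A.iterSyzygy n).projective_of_retraction hρ

lemma subsingleton_of_isZero_ext_zero
    (h : IsZero (((Ext R (ModuleCat.{u} R) 0).obj (Opposite.op A.obj)).obj (ModuleCat.of R R)))
    [Module.Projective R A] : Subsingleton A := by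
  obtain ⟨σ, hσ⟩ := Module.projective_lifting_property A.cover .id A.cover_surjective
  refine LinearMap.subsingleton_of_forall_eq_zero hσ fun φ => ?_
  have := A.freeResolution.eq_zero_of_isZero_ext_zero _ h _
    (A.freeComplex_d_comp_cover_comp 0 (N := .of R R) φ)
  exact (LinearMap.cancel_right A.cover_surjective).1 (congrArg ModuleCat.Hom.hom this)

end FGModuleCat

section

variable {R : Type} [Ring R] {M : Type} [AddCommGroup M] [Module R M]

lemma projDim_eq {d : ℕ} (hd : HasProjResLengthLE R M d)
    (hmin : ∀ n < d, ¬HasProjResLengthLE R M n) : projDim R M = d :=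
  le_antisymm (iInf₂_le d hd) (le_iInf₂ fun n hn => by exact_mod_cast not_lt.1 (hmin n · hn))

lemma hasProjResLengthLE_of_projective_iterSyzygy [IsNoetherianRing R] [Module.Finite R M]
    {n : ℕ} (h : Module.Projective R ((FGModuleCat.of R M).iterSyzygy n)) :
    HasProjResLengthLE R M n :=
  (FGModuleCat.of R M).exists_projectiveResolution_of_projective_iterSyzygy n
    ((IsProjective.iff_projective _).1 h)

end

section

variable {R : Type} [CommRing R] {M : Type} [AddCommGroup M] [Module R M]

lemma isZero_ext_of_hasProjResLengthLE {n i : ℕ} (h : HasProjResLengthLE R M n) (hi : n < i)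
    (N : ModuleCat R) :
    IsZero (((Ext R (ModuleCat R) i).obj (Opposite.op (ModuleCat.of R M))).obj N) := by
  obtain ⟨P, hP⟩ := h
  exact P.isZero_ext_of_isZero_X N (hP i hi)

variable [IsNoetherianRing R] [Module.Finite R M]

lemma hasProjResLengthLE_of_isZero_ext {n : ℕ} (h : HasProjResLengthLE R M (n + 1))
    (hExt : IsZero (((Ext R (ModuleCat R) (n + 1)).obj (Opposite.op (ModuleCat.of R M))).obj
      (ModuleCat.of R R))) :
    HasProjResLengthLE R M n := by
  have := (FGModuleCat.of R M).projective_iterSyzygy_of_isZero_ext (n + 1)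
    (isZero_ext_of_hasProjResLengthLE h (by omega) _)
  exact hasProjResLengthLE_of_projective_iterSyzygy
    ((FGModuleCat.of R M).projective_iterSyzygy_of_isZero_ext_self n hExt)

lemma subsingleton_of_isZero_ext_zero (h : HasProjResLengthLE R M 0)
    (hExt : IsZero (((Ext R (ModuleCat R) 0).obj (Opposite.op (ModuleCat.of R M))).obj
      (ModuleCat.of R R))) :
    Subsingleton M := by
  have : Module.Projective R M := (FGModuleCat.of R M).projective_iterSyzygy_of_isZero_ext 0
    (isZero_ext_of_hasProjResLengthLE h (by omega) _)
  exact (FGModuleCat.of R M).subsingleton_of_isZero_ext_zero hExt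

end

/--
Let `R` be a commutative Noetherian ring and `M` a nonzero finitely generated `R`-module
with `projdim_R(M) < ∞`.  Then `projdim_R(M) = sup { i : Ext_R^i(M, R) ≠ 0 }`, the
supremum taken in `ℕ∞`.
-/
theorem projDim_eq_iSup_ext (R : Type) [CommRing R] [IsNoetherianRing R]
    (M : Type) [AddCommGroup M] [Module R M] [Module.Finite R M] [Nontrivial M]
    (hfin : projDim R M ≠ ⊤) :
    projDim R M = ⨆ (i : ℕ) (_ : Nontrivial (extGroup R M R i)), (i : ℕ∞) := by
  classical
  obtain ⟨d, hd, hmin⟩ : ∃ d, HasProjResLengthLE R M d ∧ ∀ n < d, ¬HasProjResLengthLE R M n := by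
    have hex : ∃ n, HasProjResLengthLE R M n := by
      by_contra! h
      exact hfin (by simp [projDim, h])
    exact ⟨Nat.find hex, Nat.find_spec hex, fun n => Nat.find_min hex⟩
  have hnontriv : Nontrivial (extGroup R M R d) := by
    rw [← not_subsingleton_iff_nontrivial, ← ModuleCat.isZero_iff_subsingleton]
    intro hExt
    rcases d with _ | m
    · exact not_subsingleton M (subsingleton_of_isZero_ext_zero hd hExt)
    · exact hmin m (by omega) (hasProjResLengthLE_of_isZero_ext hd hExt)
  rw [projDim_eq hd hmin]
  refine le_antisymm (le_iSup₂ (f := fun i (_ : Nontrivial (extGroup R M R i)) => (i : ℕ∞)) d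
    hnontriv) (iSup₂_le fun i hi => ?_)
  by_contra! hlt
  rw [← not_subsingleton_iff_nontrivial, ← ModuleCat.isZero_iff_subsingleton] at hi
  exact hi (isZero_ext_of_hasProjResLengthLE hd (by exact_mod_cast hlt) _)
end

section
/- Let T be a commutative ℚ_p-algebra, let L be a finite field extension of ℚ_p, and let M₁, M₂ be modules over T ⊗_{ℚ_p} L that are finite dimensional as L-vector spaces. For any s ∈ T ⊗_{ℚ_p} L and i ∈ {1,2}, let D_i(X, s) = det(1 − X·s | M_i) ∈ L[X] be the reversed characteristic polynomial of the L-linear endomorphism of M_i given by the action of s. If D₁(X, t ⊗ 1) divides D₂(X, t ⊗ 1) in L[X] for every t ∈ T, then D₁(X, s) divides D₂(X, s) in L[X] for every s ∈ T ⊗_{ℚ_p} L. -/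
/-!
Write `s = ∑ⱼ lⱼ • (1 ⊗ tⱼ)`. Then `x ↦ ∑ⱼ xⱼ • (1 ⊗ tⱼ)` is an `L`-linear family of
endomorphisms of `Mᵢ` parametrised by `L^k`, and its reversed characteristic polynomials are the
specialisations of generic ones `F, G ∈ L[x₁, …, x_k][X]` with `F(0) = 1`. The power series `G / F`
specialises at every `ℚ_p`-rational point to a polynomial of degree `≤ deg G`; as `ℚ_p` is
infinite, a polynomial in the `xⱼ` vanishing at all `ℚ_p`-rational points is zero, so `G / F`
is a polynomial. Hence `F ∣ G`, and specialising at `x = l` gives the claim.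
-/

open scoped TensorProduct

noncomputable def smulEnd (L : Type) [CommRing L] {B : Type} [CommRing B] [Algebra L B]
    (M : Type) [AddCommGroup M] [Module L M] [Module B M] [IsScalarTower L B M]
    (s : B) : M →ₗ[L] M where
  toFun m := s • m
  map_add' := smul_add s
  map_smul' c m := smul_comm s c m

/-- The reversed characteristic polynomial `det(1 - X·f | M)` of an `L`-linear endomorphism
`f` of a finite-dimensional `L`-vector space `M`,
i.e. `X^{dim M} · charpoly(f)(1/X)` via the standard polynomial reversal. -/
noncomputable def revCharPoly {L : Type} [Field L] {M : Type} [AddCommGroup M] [Module L M]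
    [FiniteDimensional L M] (f : M →ₗ[L] M) : Polynomial L :=
  (LinearMap.charpoly f).reverse

open Polynomial

theorem MvPolynomial.eq_zero_of_forall_eval_algebraMap_eq_zero {K L σ : Type*} [Field K]
    [Infinite K] [CommRing L] [IsDomain L] [Algebra K L] {p : MvPolynomial σ L}
    (h : ∀ a : σ → K, MvPolynomial.eval (algebraMap K L ∘ a) p = 0) : p = 0 := by
  refine MvPolynomial.funext_set (fun _ ↦ Set.range (algebraMap K L))
    (fun _ ↦ Set.infinite_range_of_injective (algebraMap K L).injective) fun x hx ↦ ?_
  choose a ha using fun i ↦ hx i trivial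
  obtain rfl : algebraMap K L ∘ a = x := _root_.funext ha
  simpa using h a

theorem Polynomial.Monic.reverse_map {R S : Type*} [CommRing R] [CommRing S] [Nontrivial S]
    {P : R[X]} (hP : P.Monic) (f : R →+* S) : (P.map f).reverse = P.reverse.map f := by
  rw [reverse, reverse, reflect_map, hP.natDegree_map]

theorem Polynomial.dvd_of_forall_map_dvd {R S α : Type*} [CommRing R] [CommRing S] [IsDomain S]
    (φ : α → R →+* S) (hφ : ∀ r, (∀ a, φ a r = 0) → r = 0) {F G : R[X]}
    (hF : IsUnit (F.coeff 0)) (h : ∀ a, F.map (φ a) ∣ G.map (φ a)) : F ∣ G := by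
  obtain ⟨u, hu⟩ := hF
  have hconst : PowerSeries.constantCoeff (F : PowerSeries R) = u := by
    rw [← PowerSeries.coeff_zero_eq_constantCoeff_apply, coeff_coe, hu]
  set W : PowerSeries R := G * PowerSeries.invOfUnit F u
  have hFW : (F : PowerSeries R) * W = G := by
    rw [mul_left_comm, PowerSeries.mul_invOfUnit _ _ hconst, mul_one]
  have hW : ∀ j, G.natDegree < j → PowerSeries.coeff j W = 0 := by
    intro j hj
    refine hφ _ fun a ↦ ?_
    obtain ⟨q, hq⟩ := h a
    have hFa : F.map (φ a) ≠ 0 := fun h0 ↦ (u.map (φ a).toMonoidHom).ne_zero <| by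
      simpa [coeff_map, ← hu] using congrArg (coeff · 0) h0
    have hWa : PowerSeries.map (φ a) W = q := by
      have := congrArg (PowerSeries.map (φ a)) hFW
      rw [map_mul, ← polynomial_map_coe, ← polynomial_map_coe, hq, coe_mul] at this
      exact mul_left_cancel₀ (by rwa [Ne, coe_eq_zero_iff]) this
    have hdeg : q.natDegree ≤ G.natDegree := by
      rcases eq_or_ne q 0 with rfl | hq0
      · simp
      · exact (natDegree_le_of_dvd (dvd_mul_left q _) (mul_ne_zero hFa hq0)).trans
          (hq ▸ natDegree_map_le)
    rw [← PowerSeries.coeff_map, hWa, coeff_coe, coeff_eq_zero_of_natDegree_lt (by omega)]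
  refine ⟨PowerSeries.trunc (G.natDegree + 1) W, coe_inj.mp ?_⟩
  rw [coe_mul, ← hFW]
  congr 1
  ext j
  rw [coeff_coe, PowerSeries.coeff_trunc]
  split_ifs with hj
  · rfl
  · exact hW j (by omega)

theorem revCharPoly_eq_map_reverse_polyCharpoly {L : Type} [Field L] {ι : Type*} [Fintype ι]
    [DecidableEq ι] {M : Type} [AddCommGroup M] [Module L M] [FiniteDimensional L M]
    (φ : (ι → L) →ₗ[L] Module.End L M) (x : ι → L) :
    revCharPoly (φ x) = (φ.polyCharpoly (Pi.basisFun L ι)).reverse.map (MvPolynomial.eval x) := by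
  rw [revCharPoly, ← (LinearMap.polyCharpoly_monic _ _).reverse_map,
    ← LinearMap.polyCharpoly_map_eq_charpoly φ (Pi.basisFun L ι) x]
  congr 3

theorem revCharPoly_dvd_of_forall_algebraMap {K L : Type} [Field K] [Infinite K] [Field L]
    [Algebra K L] {ι : Type*} [Fintype ι] {M₁ M₂ : Type} [AddCommGroup M₁] [Module L M₁]
    [FiniteDimensional L M₁] [AddCommGroup M₂] [Module L M₂] [FiniteDimensional L M₂]
    (φ₁ : (ι → L) →ₗ[L] Module.End L M₁) (φ₂ : (ι → L) →ₗ[L] Module.End L M₂)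
    (h : ∀ a : ι → K,
      revCharPoly (φ₁ (algebraMap K L ∘ a)) ∣ revCharPoly (φ₂ (algebraMap K L ∘ a)))
    (x : ι → L) : revCharPoly (φ₁ x) ∣ revCharPoly (φ₂ x) := by
  classical
  rw [revCharPoly_eq_map_reverse_polyCharpoly, revCharPoly_eq_map_reverse_polyCharpoly]
  refine Polynomial.map_dvd _ <|
    dvd_of_forall_map_dvd (fun a ↦ MvPolynomial.eval (algebraMap K L ∘ a))
      (fun _ ↦ MvPolynomial.eq_zero_of_forall_eval_algebraMap_eq_zero) ?_ fun a ↦ ?_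
  · rw [coeff_zero_reverse, (LinearMap.polyCharpoly_monic _ _).leadingCoeff]
    exact isUnit_one
  · have := h a
    rwa [revCharPoly_eq_map_reverse_polyCharpoly, revCharPoly_eq_map_reverse_polyCharpoly] at this

theorem smulEnd_sum_smul (L : Type) [CommRing L] {B : Type} [CommRing B] [Algebra L B]
    (M : Type) [AddCommGroup M] [Module L M] [Module B M] [IsScalarTower L B M]
    {ι : Type*} [Fintype ι] (b : ι → B) (x : ι → L) :
    smulEnd L M (∑ i, x i • b i) = Fintype.linearCombination L (fun i ↦ smulEnd L M (b i)) x := by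
  ext m
  simp [smulEnd, Fintype.linearCombination_apply, Finset.sum_smul, smul_assoc]

theorem revCharPoly_dvd_of_dvd_on_pure_tensors_general
    (p : ℕ) [Fact p.Prime]
    (L : Type) [Field L] [Algebra ℚ_[p] L]
    (T : Type) [CommRing T] [Algebra ℚ_[p] T]
    (M₁ : Type) [AddCommGroup M₁] [Module (L ⊗[ℚ_[p]] T) M₁] [Module L M₁]
    [IsScalarTower L (L ⊗[ℚ_[p]] T) M₁] [FiniteDimensional L M₁]
    (M₂ : Type) [AddCommGroup M₂] [Module (L ⊗[ℚ_[p]] T) M₂] [Module L M₂]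
    [IsScalarTower L (L ⊗[ℚ_[p]] T) M₂] [FiniteDimensional L M₂]
    (h : ∀ t : T,
      revCharPoly (smulEnd L M₁ ((1 : L) ⊗ₜ[ℚ_[p]] t)) ∣
        revCharPoly (smulEnd L M₂ ((1 : L) ⊗ₜ[ℚ_[p]] t))) :
    ∀ s : L ⊗[ℚ_[p]] T,
      revCharPoly (smulEnd L M₁ s) ∣ revCharPoly (smulEnd L M₂ s) := by
  intro s
  obtain ⟨k, l, t, rfl⟩ := TensorProduct.exists_sum_tmul_eq s
  have hs : ∑ j, l j ⊗ₜ[ℚ_[p]] t j = ∑ j, l j • ((1 : L) ⊗ₜ[ℚ_[p]] t j) := by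
    simp [TensorProduct.smul_tmul']
  have hpure (a : Fin k → ℚ_[p]) : (1 : L) ⊗ₜ[ℚ_[p]] (∑ j, a j • t j) =
      ∑ j, (algebraMap ℚ_[p] L ∘ a) j • ((1 : L) ⊗ₜ[ℚ_[p]] t j) := by
    simp [TensorProduct.tmul_sum, TensorProduct.tmul_smul, algebraMap_smul]
  rw [hs, smulEnd_sum_smul, smulEnd_sum_smul]
  refine revCharPoly_dvd_of_forall_algebraMap (K := ℚ_[p]) _ _ (fun a ↦ ?_) l
  simpa only [hpure, smulEnd_sum_smul] using h (∑ j, a j • t j)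

/--
Let `T` be a commutative `ℚ_p`-algebra, `L` a finite field extension of `ℚ_p`, and
`M₁, M₂` modules over `T ⊗_{ℚ_p} L` that are finite dimensional as `L`-vector spaces.
Writing `D_i(X, s) = det(1 − X·s | M_i) ∈ L[X]` for the reversed characteristic polynomial
of the action of `s ∈ T ⊗_{ℚ_p} L` on `M_i`:  if `D₁(X, t ⊗ 1)` divides `D₂(X, t ⊗ 1)` in
`L[X]` for every `t ∈ T`, then `D₁(X, s)` divides `D₂(X, s)` in `L[X]` for every
`s ∈ T ⊗_{ℚ_p} L`.
-/
theorem revCharPoly_dvd_of_dvd_on_pure_tensors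
    (p : ℕ) [Fact p.Prime]
    (L : Type) [Field L] [Algebra ℚ_[p] L] [FiniteDimensional ℚ_[p] L]
    (T : Type) [CommRing T] [Algebra ℚ_[p] T]
    (M₁ : Type) [AddCommGroup M₁] [Module (L ⊗[ℚ_[p]] T) M₁] [Module L M₁]
    [IsScalarTower L (L ⊗[ℚ_[p]] T) M₁] [FiniteDimensional L M₁]
    (M₂ : Type) [AddCommGroup M₂] [Module (L ⊗[ℚ_[p]] T) M₂] [Module L M₂]
    [IsScalarTower L (L ⊗[ℚ_[p]] T) M₂] [FiniteDimensional L M₂]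
    (h : ∀ t : T,
      revCharPoly (smulEnd L M₁ ((1 : L) ⊗ₜ[ℚ_[p]] t)) ∣
        revCharPoly (smulEnd L M₂ ((1 : L) ⊗ₜ[ℚ_[p]] t))) :
    ∀ s : L ⊗[ℚ_[p]] T,
      revCharPoly (smulEnd L M₁ s) ∣ revCharPoly (smulEnd L M₂ s) :=
  revCharPoly_dvd_of_dvd_on_pure_tensors_general p L T M₁ M₂ h
end

section
/- Let R be a commutative ring, n a natural number, and let l, d, u be n×n matrices over R such that l is lower unitriangular (l_{ii} = 1 for all i and l_{ij} = 0 for i < j), u is upper unitriangular (u_{ii} = 1 for all i and u_{ij} = 0 for i > j), and d is diagonal (d_{ij} = 0 for i ≠ j). Set g = l·d·u. Then for every k with 1 ≤ k ≤ n, the leading principal minor m_k(g) (the determinant of the upper-left k×k submatrix of g) equals the product d_{11}·d_{22}⋯d_{kk}. Consequently, if R is a field and all diagonal entries d_{ii} are nonzero, then d_{kk} = m_k(g)·m_{k−1}(g)^{−1} for all k (with m_0(g) = 1), i.e. d = diag(m₁(g), m₁(g)^{−1}m₂(g), …, m_{n−1}(g)^{−1}·det(g)). -/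
/-!
Since `l` is lower triangular, the leading `k × k` block of a product `l * a` only involves
the leading block of `l`, and dually for a right factor that is upper triangular. Hence the
leading block of `l * d * u` is the product of the leading blocks of `l`, `d` and `u`, whose
determinants are `1`, `d₁₁ ⋯ d_kk` and `1`. The quotient formula follows by comparing
consecutive products.
-/

/-- The `k`-th leading principal minor of an `n × n` matrix `g`: the determinant of the
submatrix of `g` consisting of the first `k` rows and first `k` columns (`m_0(g) = 1`). -/
def leadingMinor {R : Type} [CommRing R] {n : ℕ} (g : Matrix (Fin n) (Fin n) R)
    (k : ℕ) (hk : k ≤ n) : R :=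
  (g.submatrix (Fin.castLE hk) (Fin.castLE hk)).det

open Matrix

namespace Matrix

variable {R : Type*} [CommSemiring R] {n : ℕ} {o p : Type*}

theorem IsLowerTriangular.submatrix_of_strictMono {m q : Type*} [Preorder m] [Preorder q]
    {A : Matrix m m R} (hA : A.IsLowerTriangular) {f : q → m} (hf : StrictMono f) :
    (A.submatrix f f).IsLowerTriangular :=
  fun _ _ h => hA (hf h)

theorem IsUpperTriangular.submatrix_of_strictMono {m q : Type*} [Preorder m] [Preorder q]
    {A : Matrix m m R} (hA : A.IsUpperTriangular) {f : q → m} (hf : StrictMono f) :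
    (A.submatrix f f).IsUpperTriangular :=
  fun _ _ h => hA (hf h)

theorem submatrix_castLE_mul_of_isLowerTriangular {A : Matrix (Fin n) (Fin n) R}
    (hA : A.IsLowerTriangular) (B : Matrix (Fin n) o R) {k : ℕ} (hk : k ≤ n) (f : p → o) :
    (A * B).submatrix (Fin.castLE hk) f =
      A.submatrix (Fin.castLE hk) (Fin.castLE hk) * B.submatrix (Fin.castLE hk) f := by
  ext i j
  simp only [submatrix_apply, mul_apply]
  refine (Fintype.sum_of_injective _ (Fin.castLE_injective hk) _ _ (fun m hm => ?_)
    (fun _ => rfl)).symm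
  have hkm : k ≤ m := by
    by_contra! h
    exact hm ⟨⟨m, h⟩, rfl⟩
  rw [hA (i := Fin.castLE hk i) (j := m) (Fin.lt_def.2 (i.2.trans_le hkm)), zero_mul]

theorem submatrix_mul_castLE_of_isUpperTriangular (A : Matrix o (Fin n) R)
    {B : Matrix (Fin n) (Fin n) R} (hB : B.IsUpperTriangular) {k : ℕ} (hk : k ≤ n)
    (f : p → o) :
    (A * B).submatrix f (Fin.castLE hk) =
      A.submatrix f (Fin.castLE hk) * B.submatrix (Fin.castLE hk) (Fin.castLE hk) := by
  rw [← transpose_inj]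
  simpa only [transpose_mul, transpose_submatrix] using
    submatrix_castLE_mul_of_isLowerTriangular hB.transpose Aᵀ hk f

end Matrix

section LDU

variable {R : Type} [CommRing R] {n : ℕ} {l d u : Matrix (Fin n) (Fin n) R}
  (hl : l.IsLowerTriangular) (hl₁ : ∀ i, l i i = 1)
  (hu : u.IsUpperTriangular) (hu₁ : ∀ i, u i i = 1) (hd : d.IsDiag)
include hl hl₁ hu hu₁ hd

theorem leadingMinor_mul_mul_eq_prod (k : ℕ) (hk : k ≤ n) :
    leadingMinor (l * d * u) k hk = ∏ i : Fin k, d (Fin.castLE hk i) (Fin.castLE hk i) := by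
  have hD : (d.submatrix (Fin.castLE hk) (Fin.castLE hk)).IsUpperTriangular :=
    fun _ _ h => hd.submatrix (Fin.castLE_injective hk) h.ne'
  rw [leadingMinor, submatrix_mul_castLE_of_isUpperTriangular _ hu,
    submatrix_castLE_mul_of_isLowerTriangular hl, det_mul, det_mul,
    det_of_isLowerTriangular _ (hl.submatrix_of_strictMono (Fin.strictMono_castLE hk)),
    det_of_isUpperTriangular (hu.submatrix_of_strictMono (Fin.strictMono_castLE hk)),
    det_of_isUpperTriangular hD]
  simp [hl₁, hu₁]

theorem leadingMinor_mul_mul_succ (k : ℕ) (hk : k + 1 ≤ n) :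
    leadingMinor (l * d * u) (k + 1) hk =
      leadingMinor (l * d * u) k (Nat.le_of_succ_le hk) * d ⟨k, hk⟩ ⟨k, hk⟩ := by
  rw [leadingMinor_mul_mul_eq_prod hl hl₁ hu hu₁ hd,
    leadingMinor_mul_mul_eq_prod hl hl₁ hu hu₁ hd, Fin.prod_univ_castSucc]
  rfl

end LDU

theorem diag_eq_leadingMinor_mul_inv {K : Type} [Field K] {n : ℕ}
    {l d u : Matrix (Fin n) (Fin n) K} (hl : l.IsLowerTriangular) (hl₁ : ∀ i, l i i = 1)
    (hu : u.IsUpperTriangular) (hu₁ : ∀ i, u i i = 1) (hd : d.IsDiag)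
    (hd₀ : ∀ i, d i i ≠ 0) (k : ℕ) (hk : k + 1 ≤ n) :
    d ⟨k, hk⟩ ⟨k, hk⟩ =
      leadingMinor (l * d * u) (k + 1) hk *
        (leadingMinor (l * d * u) k (Nat.le_of_succ_le hk))⁻¹ := by
  have hminor : leadingMinor (l * d * u) k (Nat.le_of_succ_le hk) ≠ 0 := by
    rw [leadingMinor_mul_mul_eq_prod hl hl₁ hu hu₁ hd]
    exact Finset.prod_ne_zero_iff.2 fun i _ => hd₀ _
  rw [leadingMinor_mul_mul_succ hl hl₁ hu hu₁ hd, mul_comm, inv_mul_cancel_left₀ hminor]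

/--
Let `R` be a commutative ring and `l, d, u` be `n × n` matrices over `R` with `l` lower
unitriangular, `u` upper unitriangular and `d` diagonal, and set `g = l·d·u`.  Then for
every `1 ≤ k ≤ n` the `k`-th leading principal minor of `g` equals `d_{11}⋯d_{kk}`.
Consequently, if `R` is a field and all diagonal entries of `d` are nonzero, then
`d_{kk} = m_k(g)·m_{k−1}(g)⁻¹` for all `k` (with `m_0(g) = 1`).
-/
theorem leadingMinor_of_LDU :
    (∀ (R : Type) [CommRing R] (n : ℕ) (l d u : Matrix (Fin n) (Fin n) R),
      (∀ i, l i i = 1) → (∀ i j : Fin n, i < j → l i j = 0) →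
      (∀ i, u i i = 1) → (∀ i j : Fin n, j < i → u i j = 0) →
      (∀ i j : Fin n, i ≠ j → d i j = 0) →
      ∀ (k : ℕ) (_ : 1 ≤ k) (hk : k ≤ n),
        leadingMinor (l * d * u) k hk =
          ∏ i : Fin k, d (Fin.castLE hk i) (Fin.castLE hk i)) ∧
    (∀ (K : Type) [Field K] (n : ℕ) (l d u : Matrix (Fin n) (Fin n) K),
      (∀ i, l i i = 1) → (∀ i j : Fin n, i < j → l i j = 0) →
      (∀ i, u i i = 1) → (∀ i j : Fin n, j < i → u i j = 0) →
      (∀ i j : Fin n, i ≠ j → d i j = 0) →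
      (∀ i, d i i ≠ 0) →
      ∀ (k : ℕ) (hk1 : 1 ≤ k) (hk : k ≤ n),
        d ⟨k - 1, by omega⟩ ⟨k - 1, by omega⟩ =
          leadingMinor (l * d * u) k hk *
            (leadingMinor (l * d * u) (k - 1) (by omega))⁻¹) := by
  refine ⟨fun R _ n l d u hl₁ hl hu₁ hu hd k _ hk =>
    leadingMinor_mul_mul_eq_prod hl hl₁ hu hu₁ hd k hk, ?_⟩
  intro K _ n l d u hl₁ hl hu₁ hu hd hd₀ k hk₁ hk
  obtain ⟨k, rfl⟩ := Nat.exists_eq_add_of_le' hk₁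
  exact diag_eq_leadingMinor_mul_inv hl hl₁ hu hu₁ hd hd₀ k hk
end
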